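/- arXiv:1601.07588 — 3 statements merged into one kernel-verified Lean document; each statement's English description precedes it below -/
import Mathlib

section
/- Let n ≥ 2 be an integer and let r : I → ℝ be a twice differentiable positive function on an open interval I containing 0 with r(0) = 1, r'(0) = 0, and satisfying r(z)·r''(z) − (n−1)(1 + r'(z)²) = 0 for all z ∈ I. Then r''(z) = (n−1)·r(z)^(2n−3) for all z ∈ I. -/
/-!
Writing `n = m + 1`, the profile equation `r r'' = m (1 + r'²)` has the first integral
`(1 + r'²) / r^(2m)`: its derivative is `2 r' r^(2m-1) (r r'' - m (1 + r'²)) / r^(4m)`.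
The initial conditions make it equal to `1`, so `1 + r'² = r^(2m)`, and substituting this
back into the equation gives `r r'' = m r^(2m)`, i.e. `r'' = m r^(2m-1)`.
-/

theorem natCast_mul_pow_sub_one_mul {R : Type*} [CommSemiring R] (k : ℕ) (x : R) :
    (k : R) * x ^ (k - 1) * x = k * x ^ k := by
  cases k with
  | zero => simp
  | succ k => rw [Nat.add_sub_cancel, mul_assoc, ← pow_succ]

theorem Convex.eq_of_hasDerivWithinAt_eq_zero {𝕜 G : Type*} [RCLike 𝕜] [NormedAddCommGroup G]
    [NormedSpace 𝕜 G] {f : 𝕜 → G} {s : Set 𝕜} (hs : Convex ℝ s)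
    (hf : ∀ x ∈ s, HasDerivWithinAt f 0 s x) {x y : 𝕜} (hx : x ∈ s) (hy : y ∈ s) :
    f x = f y := by
  have h := hs.norm_image_sub_le_of_norm_hasDerivWithin_le hf (C := 0) (fun _ _ ↦ by simp) hx hy
  rwa [zero_mul, norm_le_zero_iff, sub_eq_zero, eq_comm] at h

noncomputable def catenoidFirstIntegral (m : ℕ) (r : ℝ → ℝ) (z : ℝ) : ℝ :=
  (1 + deriv r z ^ 2) / r z ^ (2 * m)

section FirstIntegral

variable {m : ℕ} {r : ℝ → ℝ}

theorem hasDerivAt_catenoidFirstIntegral {z : ℝ} (hr : DifferentiableAt ℝ r z)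
    (hr' : DifferentiableAt ℝ (deriv r) z) (hz : r z ≠ 0)
    (hode : r z * deriv (deriv r) z = m * (1 + deriv r z ^ 2)) :
    HasDerivAt (catenoidFirstIntegral m r) 0 z := by
  have hnum : HasDerivAt (fun z ↦ 1 + deriv r z ^ 2)
      (0 + (2 : ℕ) * deriv r z ^ (2 - 1) * deriv (deriv r) z) z :=
    (hasDerivAt_const z 1).add (hr'.hasDerivAt.pow 2)
  have hden : HasDerivAt (fun z ↦ r z ^ (2 * m))
      ((2 * m : ℕ) * r z ^ (2 * m - 1) * deriv r z) z :=
    hr.hasDerivAt.pow (2 * m)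
  have hpow := natCast_mul_pow_sub_one_mul (2 * m) (r z)
  refine (hnum.div hden (pow_ne_zero _ hz)).congr_deriv ?_
  rw [div_eq_zero_iff, or_iff_left (pow_ne_zero _ (pow_ne_zero _ hz)),
    ← mul_left_inj' hz, zero_mul]
  push_cast at hpow ⊢
  linear_combination (2 * deriv r z * r z ^ (2 * m)) * hode - (1 + deriv r z ^ 2) * deriv r z * hpow

theorem one_add_deriv_sq_eq_pow {I : Set ℝ} (hI : I.OrdConnected) (h0I : (0 : ℝ) ∈ I)
    (hne : ∀ z ∈ I, r z ≠ 0)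
    (hdiff : ∀ z ∈ I, DifferentiableAt ℝ r z ∧ DifferentiableAt ℝ (deriv r) z)
    (hr0 : r 0 = 1) (hr'0 : deriv r 0 = 0)
    (hode : ∀ z ∈ I, r z * deriv (deriv r) z = m * (1 + deriv r z ^ 2)) {z : ℝ} (hz : z ∈ I) :
    1 + deriv r z ^ 2 = r z ^ (2 * m) := by
  have hconst : catenoidFirstIntegral m r z = catenoidFirstIntegral m r 0 :=
    (convex_iff_ordConnected.mpr hI).eq_of_hasDerivWithinAt_eq_zero
      (fun x hx ↦ (hasDerivAt_catenoidFirstIntegral (hdiff x hx).1 (hdiff x hx).2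
        (hne x hx) (hode x hx)).hasDerivWithinAt) hz h0I
  rw [catenoidFirstIntegral, catenoidFirstIntegral, hr0, hr'0] at hconst
  norm_num at hconst
  exact (div_eq_one_iff_eq (pow_ne_zero _ (hne z hz))).mp hconst

theorem deriv_deriv_eq_of_one_add_deriv_sq_eq_pow {z : ℝ} (hz : r z ≠ 0)
    (hode : r z * deriv (deriv r) z = m * (1 + deriv r z ^ 2))
    (hfirst : 1 + deriv r z ^ 2 = r z ^ (2 * m)) :
    deriv (deriv r) z = m * r z ^ (2 * m - 1) := by
  have hpow := natCast_mul_pow_sub_one_mul (2 * m) (r z)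
  push_cast at hpow
  refine (mul_left_inj' hz).mp ?_
  linear_combination hode + m * hfirst - hpow / 2

end FirstIntegral

theorem catenoid_profile_second_deriv_general (n : ℕ) (hn : 2 ≤ n)
    (I : Set ℝ) (hIconn : I.OrdConnected) (h0I : (0 : ℝ) ∈ I)
    (r : ℝ → ℝ)
    (hpos : ∀ z ∈ I, 0 < r z)
    (hdiff : ∀ z ∈ I, DifferentiableAt ℝ r z ∧ DifferentiableAt ℝ (deriv r) z)
    (hr0 : r 0 = 1) (hr'0 : deriv r 0 = 0)
    (hode : ∀ z ∈ I,
      r z * deriv (deriv r) z - ((n : ℝ) - 1) * (1 + (deriv r z) ^ 2) = 0) :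
    ∀ z ∈ I, deriv (deriv r) z = ((n : ℝ) - 1) * (r z) ^ (2 * n - 3) := by
  obtain ⟨m, rfl⟩ : ∃ m, n = m + 1 := ⟨n - 1, by omega⟩
  have hcoeff : ((m + 1 : ℕ) : ℝ) - 1 = m := by push_cast; ring
  have hexp : 2 * (m + 1) - 3 = 2 * m - 1 := by omega
  have hode' : ∀ z ∈ I, r z * deriv (deriv r) z = m * (1 + deriv r z ^ 2) := fun z hz ↦ by
    have h := hode z hz
    rw [hcoeff] at h
    linear_combination h
  have hne : ∀ z ∈ I, r z ≠ 0 := fun z hz ↦ (hpos z hz).ne'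
  intro z hz
  rw [hcoeff, hexp]
  exact deriv_deriv_eq_of_one_add_deriv_sq_eq_pow (hne z hz) (hode' z hz)
    (one_add_deriv_sq_eq_pow hIconn h0I hne hdiff hr0 hr'0 hode' hz)

/-- For a normalized n-catenoid profile function `r` (positive, twice
differentiable on an open interval `I` containing `0`, with `r 0 = 1`, `r' 0 = 0`,
satisfying `r·r'' − (n−1)(1 + r'²) = 0`), the second-order identity
`r'' = (n−1)·r^(2n−3)` holds on `I`. -/
theorem catenoid_profile_second_deriv (n : ℕ) (hn : 2 ≤ n)
    (I : Set ℝ) (hIopen : IsOpen I) (hIconn : I.OrdConnected) (h0I : (0 : ℝ) ∈ I)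
    (r : ℝ → ℝ)
    (hpos : ∀ z ∈ I, 0 < r z)
    (hdiff : ∀ z ∈ I, DifferentiableAt ℝ r z ∧ DifferentiableAt ℝ (deriv r) z)
    (hr0 : r 0 = 1) (hr'0 : deriv r 0 = 0)
    (hode : ∀ z ∈ I,
      r z * deriv (deriv r) z - ((n : ℝ) - 1) * (1 + (deriv r z) ^ 2) = 0) :
    ∀ z ∈ I, deriv (deriv r) z = ((n : ℝ) - 1) * (r z) ^ (2 * n - 3) :=
  catenoid_profile_second_deriv_general n hn I hIconn h0I r hpos hdiff hr0 hr'0 hode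
end

section
/- Let n ≥ 2 be an integer, let r : (−T, T) → ℝ be a maximal n-catenoid profile function, and for c ≥ 0 let z₁(c) < 0 < z₂(c) denote the two solutions of z·r'(z − c) = r(z − c). Define f_i(c) = z_i(c)² + r(z_i(c) − c)² for i = 1, 2. Then each f_i is differentiable on (0, ∞) (and one-sidedly at 0) with f_i'(c) = (2 z_i(c) / (n−1)) · (n − r(z_i(c) − c)^(2n−2)). -/
open Set Filter ContinuousLinearMap

/-- A maximal `n`-catenoid profile function: a twice differentiable positive function
`r` on the interval `(-T, T)` (where `0 < T ≤ ∞`, encoded via `T : EReal`) with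
`r 0 = 1`, `r' 0 = 0`, satisfying the catenoid ODE `r·r'' − (n−1)(1 + r'²) = 0`,
and with `r z → ∞` as `z → ±T`. -/
def IsMaxCatenoidProfile (n : ℕ) (T : EReal) (r : ℝ → ℝ) : Prop :=
  0 < T ∧
  (∀ z : ℝ, (z : EReal) ∈ Set.Ioo (-T) T → 0 < r z) ∧
  (∀ z : ℝ, (z : EReal) ∈ Set.Ioo (-T) T →
    DifferentiableAt ℝ r z ∧ DifferentiableAt ℝ (deriv r) z) ∧
  r 0 = 1 ∧ deriv r 0 = 0 ∧
  (∀ z : ℝ, (z : EReal) ∈ Set.Ioo (-T) T →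
    r z * deriv (deriv r) z - ((n : ℝ) - 1) * (1 + (deriv r z) ^ 2) = 0) ∧
  Filter.Tendsto r
    (Filter.comap (fun z : ℝ => (z : EReal)) (nhdsWithin T (Set.Iio T))) Filter.atTop ∧
  Filter.Tendsto r
    (Filter.comap (fun z : ℝ => (z : EReal)) (nhdsWithin (-T) (Set.Ioi (-T)))) Filter.atTop

/-!
The tangency condition is `F (c, z) = 0` for `F (c, z) = z r'(z - c) - r(z - c)`, whose partial
derivative in `z` is `z r''(z - c)`. This is nonzero at a tangency point, since there
`z r' = r > 0` and the equation gives `r'' > 0`. By the implicit function theorem the tangency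
points near `(c₀, z_i c₀)` form a differentiable graph over `c`, and uniqueness of the tangency point
of a given sign identifies that graph with `z_i`. Differentiating `z² + r(z - c)²` along it and
simplifying with `z r' = r`, the equation and its first integral `1 + r'² = r^(2n-2)` gives the
formula.
-/

open Set Filter Topology ContinuousLinearMap

theorem exists_hasDerivAt_implicit {F : ℝ × ℝ → ℝ} {L : ℝ × ℝ →L[ℝ] ℝ} {c₀ z₀ : ℝ}
    (hF : HasStrictFDerivAt F L (c₀, z₀)) (hL : L (0, 1) ≠ 0) :
    ∃ φ : ℝ → ℝ, ∃ d : ℝ, L (1, d) = 0 ∧ φ c₀ = z₀ ∧ HasDerivAt φ d c₀ ∧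
      ∀ᶠ c in 𝓝 c₀, F (c, φ c) = F (c₀, z₀) := by
  have hinv : (L ∘L inr ℝ ℝ ℝ).IsInvertible := by
    refine ⟨ContinuousLinearEquiv.unitsEquivAut ℝ (Units.mk0 (L (0, 1)) hL), ?_⟩
    ext
    simp
  refine ⟨hF.implicitFunctionOfProdDomain hinv, -(L ∘L inr ℝ ℝ ℝ).inverse (L (1, 0)), ?_,
    (hF.eventually_apply_eq_iff_implicitFunctionOfProdDomain hinv).self_of_nhds.mp rfl, ?_,
    hF.eventually_apply_implicitFunctionOfProdDomain hinv⟩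
  · have h := hinv.self_apply_inverse (L (1, 0))
    rw [comp_apply, inr_apply] at h
    rw [show ((1 : ℝ), -(L ∘L inr ℝ ℝ ℝ).inverse (L (1, 0))) =
      ((1 : ℝ), (0 : ℝ)) - ((0 : ℝ), (L ∘L inr ℝ ℝ ℝ).inverse (L (1, 0))) by simp,
      map_sub, h, sub_self]
  · exact (hF.hasStrictFDerivAt_implicitFunctionOfProdDomain hinv).hasStrictDerivAt.hasDerivAt
      |>.congr_deriv (by simp)

theorem tangency_sq_norm_deriv_eq {n z d R R' R'' : ℝ} (hR'' : R'' ≠ 0) (hn : n ≠ 1)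
    (hd : (R' - z * R'') * 1 + z * R'' * d = 0) (htan : z * R' = R)
    (hode : R * R'' = (n - 1) * (1 + R' ^ 2)) :
    2 * z * d + 2 * R * (R' * (d - 1)) = 2 * z / (n - 1) * (n - (1 + R' ^ 2)) := by
  subst htan
  rw [div_mul_eq_mul_div, eq_div_iff (sub_ne_zero.2 hn)]
  apply mul_right_cancel₀ hR''
  linear_combination 2 * (n - 1) * (1 + R' ^ 2) * hd + 2 * R' * hode

def profileDomain (T : EReal) : Set ℝ := (↑) ⁻¹' Ioo (-T) T

theorem isOpen_profileDomain (T : EReal) : IsOpen (profileDomain T) :=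
  isOpen_Ioo.preimage continuous_coe_real_ereal

theorem isPreconnected_profileDomain (T : EReal) : IsPreconnected (profileDomain T) :=
  (ordConnected_Ioo.preimage_mono EReal.coe_strictMono.monotone).isPreconnected

/-- `p = (c, z)`; this vanishes iff the tangent line of the translated profile at
`(z, r (z - c))` passes through the origin. -/
noncomputable def tangencyDefect (r : ℝ → ℝ) (p : ℝ × ℝ) : ℝ :=
  p.2 * deriv r (p.2 - p.1) - r (p.2 - p.1)

namespace IsMaxCatenoidProfile

variable {n : ℕ} {T : EReal} {r : ℝ → ℝ}

theorem zero_mem_profileDomain (hr : IsMaxCatenoidProfile n T r) : (0 : ℝ) ∈ profileDomain T :=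
  ⟨by simpa using hr.1, by simpa using hr.1⟩

theorem pos (hr : IsMaxCatenoidProfile n T r) {x : ℝ} (hx : x ∈ profileDomain T) : 0 < r x :=
  hr.2.1 x hx

theorem hasDerivAt (hr : IsMaxCatenoidProfile n T r) {x : ℝ} (hx : x ∈ profileDomain T) :
    HasDerivAt r (deriv r x) x :=
  (hr.2.2.1 x hx).1.hasDerivAt

theorem hasDerivAt_deriv (hr : IsMaxCatenoidProfile n T r) {x : ℝ} (hx : x ∈ profileDomain T) :
    HasDerivAt (deriv r) (deriv (deriv r) x) x :=
  (hr.2.2.1 x hx).2.hasDerivAt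

theorem ode (hr : IsMaxCatenoidProfile n T r) {x : ℝ} (hx : x ∈ profileDomain T) :
    r x * deriv (deriv r) x = ((n : ℝ) - 1) * (1 + deriv r x ^ 2) :=
  sub_eq_zero.1 (hr.2.2.2.2.2.1 x hx)

theorem deriv_deriv_pos (hr : IsMaxCatenoidProfile n T r) (hn : 2 ≤ n) {x : ℝ}
    (hx : x ∈ profileDomain T) : 0 < deriv (deriv r) x := by
  have hn' : (1 : ℝ) < n := by exact_mod_cast hn
  refine pos_of_mul_pos_right (a := r x) ?_ (hr.pos hx).le
  rw [hr.ode hx]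
  positivity

theorem one_add_deriv_sq (hr : IsMaxCatenoidProfile n T r) (hn : 2 ≤ n) {x : ℝ}
    (hx : x ∈ profileDomain T) : 1 + deriv r x ^ 2 = r x ^ (2 * n - 2) := by
  set Φ : ℝ → ℝ := fun y => (1 + deriv r y ^ 2) / r y ^ (2 * n - 2)
  have hΦ : ∀ y ∈ profileDomain T, HasDerivAt Φ 0 y := by
    intro y hy
    refine ((hr.hasDerivAt_deriv hy).pow 2 |>.const_add 1).div ((hr.hasDerivAt hy).pow _)
      (pow_ne_zero _ (hr.pos hy).ne') |>.congr_deriv ?_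
    have hexp : 2 * n - 2 = (2 * n - 3) + 1 := by omega
    have hcast : ((2 * n - 2 : ℕ) : ℝ) = 2 * ((n : ℝ) - 1) := by
      rw [Nat.cast_sub (by omega)]; push_cast; ring
    rw [div_eq_zero_iff, hcast, hexp]
    simp only [Pi.pow_apply, Nat.add_sub_cancel, pow_succ]
    left
    linear_combination (2 * deriv r y * r y ^ (2 * n - 3)) * hr.ode hy
  have hconst := (isOpen_profileDomain T).is_const_of_deriv_eq_zero
    (isPreconnected_profileDomain T) (fun y hy => (hΦ y hy).differentiableAt.differentiableWithinAt)
    (fun y hy => (hΦ y hy).deriv) hx hr.zero_mem_profileDomain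
  have hrx := (hr.pos hx).ne'
  obtain ⟨-, -, -, hr0, hr'0, -⟩ := hr
  simp only [Φ, hr0, hr'0] at hconst
  field_simp at hconst
  simpa using hconst

theorem hasStrictDerivAt (hr : IsMaxCatenoidProfile n T r) {x : ℝ} (hx : x ∈ profileDomain T) :
    HasStrictDerivAt r (deriv r x) x :=
  hasStrictDerivAt_of_hasDerivAt_of_continuousAt
    (eventually_of_mem ((isOpen_profileDomain T).mem_nhds hx) fun _ hy => hr.hasDerivAt hy)
    (hr.hasDerivAt_deriv hx).continuousAt

theorem hasStrictDerivAt_deriv (hr : IsMaxCatenoidProfile n T r) {x : ℝ}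
    (hx : x ∈ profileDomain T) : HasStrictDerivAt (deriv r) (deriv (deriv r) x) x := by
  have hdom := (isOpen_profileDomain T).mem_nhds hx
  refine hasStrictDerivAt_of_hasDerivAt_of_continuousAt
    (eventually_of_mem hdom fun _ hy => hr.hasDerivAt_deriv hy) ?_
  -- `r''` is continuous because the equation expresses it through `r` and `r'`
  have hcont : ContinuousAt (fun y => ((n : ℝ) - 1) * (1 + deriv r y ^ 2) / r y) x :=
    (continuousAt_const.mul (continuousAt_const.add
      ((hr.hasDerivAt_deriv hx).continuousAt.pow 2))).div
      (hr.hasDerivAt hx).continuousAt (hr.pos hx).ne'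
  refine hcont.congr (eventually_of_mem hdom fun y hy => ?_)
  dsimp only
  rw [← hr.ode hy, mul_div_cancel_left₀ _ (hr.pos hy).ne']

theorem hasStrictFDerivAt_tangencyDefect (hr : IsMaxCatenoidProfile n T r) {c z : ℝ}
    (hw : z - c ∈ profileDomain T) :
    HasStrictFDerivAt (tangencyDefect r)
      ((deriv r (z - c) - z * deriv (deriv r) (z - c)) • fst ℝ ℝ ℝ +
        (z * deriv (deriv r) (z - c)) • snd ℝ ℝ ℝ) (c, z) := by
  have hw' : HasStrictFDerivAt (fun p : ℝ × ℝ => p.2 - p.1) (snd ℝ ℝ ℝ - fst ℝ ℝ ℝ) (c, z) :=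
    hasStrictFDerivAt_snd.sub hasStrictFDerivAt_fst
  refine (hasStrictFDerivAt_snd.mul
    ((hr.hasStrictDerivAt_deriv hw).comp_hasStrictFDerivAt (c, z) hw') |>.sub
    ((hr.hasStrictDerivAt hw).comp_hasStrictFDerivAt (c, z) hw')).congr_fderiv ?_
  ext <;> simp; ring

theorem hasDerivWithinAt_sq_norm_tangencyPoint (hr : IsMaxCatenoidProfile n T r) (hn : 2 ≤ n)
    {z : ℝ → ℝ} {s U : Set ℝ} (hU : IsOpen U) {c₀ : ℝ} (hw : z c₀ - c₀ ∈ profileDomain T)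
    (htan : z c₀ * deriv r (z c₀ - c₀) = r (z c₀ - c₀)) (hzU : z c₀ ∈ U)
    (huniq : ∀ c ∈ s, ∀ y, y - c ∈ profileDomain T → y * deriv r (y - c) = r (y - c) → y ∈ U →
      y = z c) :
    HasDerivWithinAt (fun c => z c ^ 2 + r (z c - c) ^ 2)
      (2 * z c₀ / ((n : ℝ) - 1) * ((n : ℝ) - r (z c₀ - c₀) ^ (2 * n - 2))) s c₀ := by
  have hz₀ : z c₀ ≠ 0 := by
    intro h
    have hpos := hr.pos hw
    rw [← htan, h, zero_mul] at hpos
    exact hpos.false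
  have hr'' := (hr.deriv_deriv_pos hn hw).ne'
  obtain ⟨φ, d, hd, hφc₀, hφ, hφtan⟩ := exists_hasDerivAt_implicit
    (hr.hasStrictFDerivAt_tangencyDefect hw) (by simpa using mul_ne_zero hz₀ hr'')
  have hφw : HasDerivAt (fun c => φ c - c) (d - 1) c₀ := hφ.sub (hasDerivAt_id c₀)
  have hφz : ∀ᶠ c in 𝓝[s] c₀, φ c = z c := by
    have hdom := hφw.continuousAt.eventually_mem
      ((isOpen_profileDomain T).mem_nhds (by rwa [hφc₀]))
    have hφU := hφ.continuousAt.eventually_mem (hU.mem_nhds (hφc₀ ▸ hzU))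
    filter_upwards [nhdsWithin_le_nhds (hφtan.and (hdom.and hφU)), self_mem_nhdsWithin]
      with c ⟨hc, hcw, hcU⟩ hcs
    simp only [tangencyDefect, htan, sub_self] at hc
    exact huniq c hcs (φ c) hcw (sub_eq_zero.1 hc) hcU
  have hsq : HasDerivAt (fun c => φ c ^ 2 + r (φ c - c) ^ 2)
      (2 * z c₀ * d + 2 * r (z c₀ - c₀) * (deriv r (z c₀ - c₀) * (d - 1))) c₀ := by
    have hrφ := (hr.hasDerivAt hw).comp_of_eq c₀ hφw (by rw [hφc₀])
    refine ((hφ.pow 2).add (hrφ.pow 2)).congr_deriv ?_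
    simp [hφc₀]
  have hn1 : (n : ℝ) ≠ 1 := by exact_mod_cast (by omega : n ≠ 1)
  rw [← hr.one_add_deriv_sq hn hw, ← tangency_sq_norm_deriv_eq hr'' hn1 (by simpa using hd) htan
    (hr.ode hw)]
  exact hsq.hasDerivWithinAt.congr_of_eventuallyEq (hφz.mono fun c hc => by simp only [hc])
    (by rw [hφc₀])

end IsMaxCatenoidProfile

/-- With `z₁(c) < 0 < z₂(c)` the two radial-tangency points of the
translated profile curve and `f_i(c) = z_i(c)² + r(z_i(c) − c)²` the squared distance
to the origin, each `f_i` is differentiable on `(0, ∞)` (one-sidedly at `0`) with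
`f_i'(c) = (2 z_i(c)/(n−1))·(n − r(z_i(c) − c)^(2n−2))`. -/
theorem squared_radius_derivative_formula (n : ℕ) (hn : 2 ≤ n)
    (T : EReal) (r : ℝ → ℝ) (hr : IsMaxCatenoidProfile n T r)
    (z₁ z₂ : ℝ → ℝ)
    (hdom₁ : ∀ c : ℝ, 0 ≤ c → ((z₁ c - c : ℝ) : EReal) ∈ Set.Ioo (-T) T)
    (hdom₂ : ∀ c : ℝ, 0 ≤ c → ((z₂ c - c : ℝ) : EReal) ∈ Set.Ioo (-T) T)
    (hneg : ∀ c : ℝ, 0 ≤ c → z₁ c < 0)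
    (hpos : ∀ c : ℝ, 0 ≤ c → 0 < z₂ c)
    (heq₁ : ∀ c : ℝ, 0 ≤ c → z₁ c * deriv r (z₁ c - c) = r (z₁ c - c))
    (heq₂ : ∀ c : ℝ, 0 ≤ c → z₂ c * deriv r (z₂ c - c) = r (z₂ c - c))
    (huniq : ∀ c : ℝ, 0 ≤ c → ∀ z : ℝ, ((z - c : ℝ) : EReal) ∈ Set.Ioo (-T) T →
      z * deriv r (z - c) = r (z - c) → z = z₁ c ∨ z = z₂ c)
    (f₁ f₂ : ℝ → ℝ)
    (hf₁ : f₁ = fun c => (z₁ c) ^ 2 + (r (z₁ c - c)) ^ 2)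
    (hf₂ : f₂ = fun c => (z₂ c) ^ 2 + (r (z₂ c - c)) ^ 2) :
    (∀ c : ℝ, 0 < c →
      HasDerivAt f₁ (2 * z₁ c / ((n : ℝ) - 1) * ((n : ℝ) - (r (z₁ c - c)) ^ (2 * n - 2))) c) ∧
    HasDerivWithinAt f₁
      (2 * z₁ 0 / ((n : ℝ) - 1) * ((n : ℝ) - (r (z₁ 0 - 0)) ^ (2 * n - 2))) (Set.Ici 0) 0 ∧
    (∀ c : ℝ, 0 < c →
      HasDerivAt f₂ (2 * z₂ c / ((n : ℝ) - 1) * ((n : ℝ) - (r (z₂ c - c)) ^ (2 * n - 2))) c) ∧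
    HasDerivWithinAt f₂
      (2 * z₂ 0 / ((n : ℝ) - 1) * ((n : ℝ) - (r (z₂ 0 - 0)) ^ (2 * n - 2))) (Set.Ici 0) 0 := by
  subst hf₁ hf₂
  have branch₁ := fun c₀ (hc₀ : 0 ≤ c₀) =>
    hr.hasDerivWithinAt_sq_norm_tangencyPoint hn (s := Ici 0) isOpen_Iio (hdom₁ c₀ hc₀)
      (heq₁ c₀ hc₀) (hneg c₀ hc₀) fun c hc y hy hyr hy_neg =>
        (huniq c hc y hy hyr).resolve_right fun h => (hpos c hc).not_gt (h ▸ hy_neg)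
  have branch₂ := fun c₀ (hc₀ : 0 ≤ c₀) =>
    hr.hasDerivWithinAt_sq_norm_tangencyPoint hn (s := Ici 0) isOpen_Ioi (hdom₂ c₀ hc₀)
      (heq₂ c₀ hc₀) (hpos c₀ hc₀) fun c hc y hy hyr hy_pos =>
        (huniq c hc y hy hyr).resolve_left fun h => (hneg c hc).not_gt (h ▸ hy_pos)
  exact ⟨fun c hc => (branch₁ c hc.le).hasDerivAt (Ici_mem_nhds hc), branch₁ 0 le_rfl,
    fun c hc => (branch₂ c hc.le).hasDerivAt (Ici_mem_nhds hc), branch₂ 0 le_rfl⟩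
end

section
/- Let n ≥ 2 be an integer, let r : (−T, T) → ℝ be a maximal n-catenoid profile function, let z₁(c) < 0 < z₂(c) denote the two solutions of z·r'(z − c) = r(z − c), and let f_i(c) = z_i(c)² + r(z_i(c) − c)². Then f₁(c) > f₂(c) for every c > 0. (Consequently, for c > 0 the two points where the translated profile curve is tangent to the radial direction lie on spheres of different radii, so after rescaling only the c = 0 profile curve yields a free boundary catenoid in the unit ball; this is the key step in the uniqueness of the free boundary n-catenoid.) -/
/-!
The profile is even (both `t ↦ (r t, r' t)` and `t ↦ (r (-t), -r' (-t))` solve the same initial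
value problem), so the two tangency points of the `c`-translate come from parameters `a, b > 0` on
the increasing branch with `h a = c` and `h b = -c`, where `h = r / r' - id` (`tangentShift`) is
strictly decreasing. Along this branch the squared radius `G = (r / r')² + r²` (`tangentRadiusSq`)
satisfies `dG = -q dh`, and `q` (`radiusSlope`) is a convex function of `h` whose value `q₀` at
`h = 0` is positive, because the first integral `1 + r'² = r^(2n-2)` forces `r'² > n - 1` there.
Hence `G b - G a ≥ 2 c q₀ > 0`. To avoid inverting `h`, this is run as the monotonicity of
`G + q₀ h - (C / 2) h²`, where `q₀ - C h` is the tangent line of `q` at `h = 0`.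
-/

open Set

theorem isMinOn_of_hasDerivAt_of_mul_sub_nonneg {f f' : ℝ → ℝ} {D : Set ℝ} {w : ℝ}
    (hD : D.OrdConnected) (hf : ∀ x ∈ D, HasDerivAt f (f' x) x) (hw : w ∈ D)
    (hsign : ∀ x ∈ D, 0 ≤ (x - w) * f' x) : IsMinOn f D w := by
  intro x hx
  show f w ≤ f x
  rcases le_total x w with hxw | hwx
  · have hsub : Icc x w ⊆ D := hD.out hx hw
    refine antitoneOn_of_hasDerivWithinAt_nonpos (convex_Icc x w)
      (fun y hy => (hf y (hsub hy)).continuousAt.continuousWithinAt)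
      (fun y hy => (hf y (hsub (interior_subset hy))).hasDerivWithinAt) (fun y hy => ?_)
      (left_mem_Icc.2 hxw) (right_mem_Icc.2 hxw) hxw
    rw [interior_Icc] at hy
    exact nonpos_of_mul_nonneg_right (hsign y (hsub (Ioo_subset_Icc_self hy))) (by linarith [hy.2])
  · have hsub : Icc w x ⊆ D := hD.out hw hx
    refine monotoneOn_of_hasDerivWithinAt_nonneg (convex_Icc w x)
      (fun y hy => (hf y (hsub hy)).continuousAt.continuousWithinAt)
      (fun y hy => (hf y (hsub (interior_subset hy))).hasDerivWithinAt) (fun y hy => ?_)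
      (left_mem_Icc.2 hwx) (right_mem_Icc.2 hwx) hwx
    rw [interior_Icc] at hy
    exact nonneg_of_mul_nonneg_right (hsign y (hsub (Ioo_subset_Icc_self hy))) (by linarith [hy.1])

theorem add_inv_le_add_inv {v w : ℝ} (hv : 1 ≤ v) (hvw : v ≤ w) : v + v⁻¹ ≤ w + w⁻¹ := by
  have hw : 0 < w := by linarith
  have : v⁻¹ - w⁻¹ ≤ w - v := by
    rw [inv_sub_inv (by linarith) hw.ne', div_le_iff₀ (by positivity)]
    nlinarith [mul_nonneg (sub_nonneg.2 hvw) (by nlinarith : (0 : ℝ) ≤ v * w - 1)]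
  linarith

-- The equation `r r'' = (n - 1) (1 + r'²)` as a first order system for `(r, r')`.
noncomputable def catenoidField (n : ℕ) (p : ℝ × ℝ) : ℝ × ℝ :=
  (p.2, (n - 1) * (1 + p.2 ^ 2) / p.1)

theorem catenoidField_lipschitzOnWith (n : ℕ) (C : ℝ) :
    ∃ K, LipschitzOnWith K (catenoidField n) (Icc 1 C ×ˢ Icc (-C) C) := by
  refine ContDiffOn.exists_lipschitzOnWith (n := 1) ?_ one_ne_zero
    ((convex_Icc _ _).prod (convex_Icc _ _)) (isCompact_Icc.prod isCompact_Icc)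
  exact contDiffOn_snd.prodMk
    ((contDiffOn_const.mul (contDiffOn_const.add (contDiffOn_snd.pow 2))).div contDiffOn_fst
      fun p hp => (zero_lt_one.trans_le hp.1.1).ne')

structure IsCatenoidSolution (n : ℕ) (I : Set ℝ) (r : ℝ → ℝ) : Prop where
  ordConnected : I.OrdConnected
  zero_mem : (0 : ℝ) ∈ I
  neg_mem : ∀ z ∈ I, -z ∈ I
  pos : ∀ z ∈ I, 0 < r z
  differentiableAt : ∀ z ∈ I, DifferentiableAt ℝ r z
  differentiableAt_deriv : ∀ z ∈ I, DifferentiableAt ℝ (deriv r) z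
  ode : ∀ z ∈ I, r z * deriv (deriv r) z = (n - 1) * (1 + deriv r z ^ 2)
  apply_zero : r 0 = 1
  deriv_zero : deriv r 0 = 0

theorem IsMaxCatenoidProfile.isCatenoidSolution {n : ℕ} {T : EReal} {r : ℝ → ℝ}
    (h : IsMaxCatenoidProfile n T r) :
    IsCatenoidSolution n {z : ℝ | (z : EReal) ∈ Ioo (-T) T} r := by
  obtain ⟨hT, hpos, hdiff, h0, h0', hode, -, -⟩ := h
  refine ⟨⟨fun x hx y hy z hz => ⟨hx.1.trans_le (EReal.coe_le_coe_iff.2 hz.1),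
    (EReal.coe_le_coe_iff.2 hz.2).trans_lt hy.2⟩⟩, ⟨?_, hT⟩, fun z hz => ⟨?_, ?_⟩, hpos,
    fun z hz => (hdiff z hz).1, fun z hz => (hdiff z hz).2,
    fun z hz => by linarith [hode z hz], h0, h0'⟩
  · exact EReal.neg_lt_comm.1 (by simpa using hT)
  · rw [EReal.coe_neg, EReal.neg_lt_neg_iff]; exact hz.2
  · rw [EReal.coe_neg, EReal.neg_lt_comm]; exact hz.1

/-- For the translate `z ↦ r (z - c)` of the profile curve, the point over `z = x + c` is a point of
radial tangency (`z r'(x) = r(x)`) exactly when `tangentShift r x = c`, and its squared distance to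
the origin is then `tangentRadiusSq r x`. -/
noncomputable def tangentShift (r : ℝ → ℝ) (x : ℝ) : ℝ := r x / deriv r x - x

noncomputable def tangentRadiusSq (r : ℝ → ℝ) (x : ℝ) : ℝ := (r x / deriv r x) ^ 2 + r x ^ 2

/-- `-shiftSpeed` is the derivative of `tangentShift`; `radiusSlope` is the derivative of
`tangentRadiusSq` with respect to `-tangentShift`, and `slopeRate n (1 + r'²)` that of
`radiusSlope`. -/
noncomputable def shiftSpeed (n : ℕ) (r : ℝ → ℝ) (x : ℝ) : ℝ :=
  (n - 1) * (1 + deriv r x ^ 2) / deriv r x ^ 2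

noncomputable def radiusSlope (n : ℕ) (r : ℝ → ℝ) (x : ℝ) : ℝ :=
  2 * r x * (deriv r x ^ 2 + 1 - n) / ((n - 1) * deriv r x)

noncomputable def slopeRate (n : ℕ) (v : ℝ) : ℝ :=
  2 / (n - 1) ^ 2 * (n * (v + v⁻¹) + n ^ 2 - 4 * n + 1)

theorem slopeRate_le_slopeRate (n : ℕ) {v w : ℝ} (hv : 1 ≤ v) (hvw : v ≤ w) :
    slopeRate n v ≤ slopeRate n w := by
  unfold slopeRate
  gcongr ?_ * (_ * ?_ + _ - _ + _)
  exact add_inv_le_add_inv hv hvw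

theorem shiftSpeed_pos {n : ℕ} {r : ℝ → ℝ} {x : ℝ} (hn : 2 ≤ n) (hE : deriv r x ≠ 0) :
    0 < shiftSpeed n r x := by
  have : (1 : ℝ) < n := Nat.one_lt_cast.2 hn
  exact div_pos (mul_pos (by linarith) (by positivity)) (by positivity)

namespace IsCatenoidSolution

variable {n : ℕ} {I : Set ℝ} {r : ℝ → ℝ} {x z : ℝ} (hr : IsCatenoidSolution n I r)
include hr

theorem convex : Convex ℝ I := hr.ordConnected.convex

theorem hasDerivAt (hz : z ∈ I) : HasDerivAt r (deriv r z) z :=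
  (hr.differentiableAt z hz).hasDerivAt

theorem hasDerivAt_deriv (hz : z ∈ I) : HasDerivAt (deriv r) (deriv (deriv r) z) z :=
  (hr.differentiableAt_deriv z hz).hasDerivAt

theorem deriv_deriv_eq (hz : z ∈ I) :
    deriv (deriv r) z = (n - 1) * (1 + deriv r z ^ 2) / r z := by
  rw [eq_div_iff (hr.pos z hz).ne', mul_comm]
  exact hr.ode z hz

theorem deriv_deriv_pos (hn : 2 ≤ n) (hz : z ∈ I) : 0 < deriv (deriv r) z := by
  have : (1 : ℝ) < n := Nat.one_lt_cast.2 hn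
  rw [hr.deriv_deriv_eq hz]
  exact div_pos (mul_pos (by linarith) (by positivity)) (hr.pos z hz)

theorem strictMonoOn_deriv (hn : 2 ≤ n) : StrictMonoOn (deriv r) I :=
  strictMonoOn_of_hasDerivWithinAt_pos hr.convex
    (fun _ hz => (hr.hasDerivAt_deriv hz).continuousAt.continuousWithinAt)
    (fun _ hz => (hr.hasDerivAt_deriv (interior_subset hz)).hasDerivWithinAt)
    (fun _ hz => hr.deriv_deriv_pos hn (interior_subset hz))

theorem deriv_pos_iff (hn : 2 ≤ n) (hz : z ∈ I) : 0 < deriv r z ↔ 0 < z := by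
  simpa only [hr.deriv_zero] using (hr.strictMonoOn_deriv hn).lt_iff_lt hr.zero_mem hz

theorem deriv_neg_iff (hn : 2 ≤ n) (hz : z ∈ I) : deriv r z < 0 ↔ z < 0 := by
  simpa only [hr.deriv_zero] using (hr.strictMonoOn_deriv hn).lt_iff_lt hz hr.zero_mem

theorem first_integral (hn : 2 ≤ n) (hz : z ∈ I) :
    1 + deriv r z ^ 2 = r z ^ (2 * (n - 1)) := by
  set F : ℝ → ℝ := fun y => (1 + deriv r y ^ 2) / r y ^ (2 * (n - 1))
  have hF : ∀ y ∈ I, HasDerivAt F 0 y := by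
    intro y hy
    have hm : 2 * (n - 1) ≠ 0 := by omega
    have hry := (hr.pos y hy).ne'
    refine (((hr.hasDerivAt_deriv hy).pow 2).const_add 1 |>.div
      ((hr.hasDerivAt hy).pow _) (pow_ne_zero _ hry)).congr_deriv ?_
    rw [div_eq_zero_iff, ← pow_sub_one_mul hm]
    left
    simp only [Pi.pow_apply, Pi.mul_apply]
    push_cast [Nat.cast_sub (by omega : 1 ≤ n)]
    linear_combination (2 * deriv r y * r y ^ (2 * (n - 1) - 1)) * hr.ode y hy
  have hconst := hr.convex.norm_image_sub_le_of_norm_hasDerivWithin_le (f' := fun _ => 0) (C := 0)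
    (fun y hy => (hF y hy).hasDerivWithinAt) (fun _ _ => by simp) hr.zero_mem hz
  have hF0 : F 0 = 1 := by simp [F, hr.apply_zero, hr.deriv_zero]
  have hFz : F z = 1 := by
    rw [← hF0]; simpa [sub_eq_zero] using hconst
  have hrz := (hr.pos z hz).ne'
  simp only [F] at hFz
  rwa [div_eq_one_iff_eq (pow_ne_zero _ hrz)] at hFz

theorem one_le (hn : 2 ≤ n) (hz : z ∈ I) : 1 ≤ r z := by
  refine (one_le_pow_iff_of_nonneg (hr.pos z hz).le (by omega : 2 * (n - 1) ≠ 0)).1 ?_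
  rw [← hr.first_integral hn hz]
  nlinarith [sq_nonneg (deriv r z)]

theorem one_lt_of_deriv_ne_zero (hn : 2 ≤ n) (hz : z ∈ I) (hE : deriv r z ≠ 0) : 1 < r z := by
  refine (one_lt_pow_iff_of_nonneg (hr.pos z hz).le (by omega : 2 * (n - 1) ≠ 0)).1 ?_
  rw [← hr.first_integral hn hz]
  have : 0 < deriv r z ^ 2 := by positivity
  linarith

theorem sub_one_le_deriv_deriv (hn : 2 ≤ n) (hz : z ∈ I) : (n : ℝ) - 1 ≤ deriv (deriv r) z := by
  have : (1 : ℝ) < n := Nat.one_lt_cast.2 hn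
  have hrz := hr.pos z hz
  have hpow : r z ≤ r z ^ (2 * (n - 1)) := le_self_pow₀ (hr.one_le hn hz) (by omega)
  refine le_of_mul_le_mul_left ?_ hrz
  rw [hr.ode z hz, hr.first_integral hn hz]
  nlinarith

theorem sub_one_mul_le_deriv (hn : 2 ≤ n) (hz : z ∈ I) (hz0 : 0 ≤ z) :
    (n - 1) * z ≤ deriv r z := by
  have hsub : Icc 0 z ⊆ I := hr.ordConnected.out hr.zero_mem hz
  have hmono : MonotoneOn (fun y => deriv r y - (n - 1) * y) (Icc 0 z) :=
    monotoneOn_of_hasDerivWithinAt_nonneg (convex_Icc 0 z)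
      (fun y hy => ((hr.hasDerivAt_deriv (hsub hy)).sub
        ((hasDerivAt_id y).const_mul _)).continuousAt.continuousWithinAt)
      (fun y hy => ((hr.hasDerivAt_deriv (hsub (interior_subset hy))).sub
        ((hasDerivAt_id y).const_mul _)).hasDerivWithinAt)
      (fun y hy => by
        simpa using hr.sub_one_le_deriv_deriv hn (hsub (interior_subset hy)))
  have := hmono (left_mem_Icc.2 hz0) (right_mem_Icc.2 hz0) hz0
  simp only [hr.deriv_zero, mul_zero, sub_zero] at this
  linarith

theorem hasDerivAt_phase (hz : z ∈ I) :
    HasDerivAt (fun t => (r t, deriv r t)) (catenoidField n (r z, deriv r z)) z := by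
  have := (hr.hasDerivAt hz).prodMk (hr.hasDerivAt_deriv hz)
  rwa [hr.deriv_deriv_eq hz] at this

theorem hasDerivAt_reflected_phase (hz : -z ∈ I) :
    HasDerivAt (fun t => (r (-t), -deriv r (-t))) (catenoidField n (r (-z), -deriv r (-z))) z := by
  have h1 := (hr.hasDerivAt hz).comp z (hasDerivAt_neg z)
  have h2 := ((hr.hasDerivAt_deriv hz).comp z (hasDerivAt_neg z)).neg
  refine (h1.prodMk h2).congr_deriv ?_
  rw [catenoidField, hr.deriv_deriv_eq hz, Prod.mk.injEq]
  constructor <;> ring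

theorem exists_phase_mem_box (hn : 2 ≤ n) {a : ℝ} (hsub : Icc (-a) a ⊆ I) :
    ∃ C, ∀ t ∈ Icc (-a) a, (r t, deriv r t) ∈ Icc 1 C ×ˢ Icc (-C) C := by
  obtain ⟨C, hC⟩ := isCompact_Icc.exists_bound_of_continuousOn
    fun t ht => (hr.hasDerivAt_phase (hsub ht)).continuousAt.continuousWithinAt
  refine ⟨C, fun t ht => ⟨⟨hr.one_le hn (hsub ht), ?_⟩, ?_⟩⟩
  · exact (le_abs_self _).trans ((norm_fst_le (r t, deriv r t)).trans (hC t ht))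
  · exact abs_le.1 ((norm_snd_le (r t, deriv r t)).trans (hC t ht))

theorem eqOn_reflected_phase (hn : 2 ≤ n) {a : ℝ} (ha : 0 < a) (haI : a ∈ I) :
    EqOn (fun t => (r t, deriv r t)) (fun t => (r (-t), -deriv r (-t))) (Icc (-a) a) := by
  have hsub : Icc (-a) a ⊆ I := hr.ordConnected.out (hr.neg_mem a haI) haI
  have hneg : ∀ t ∈ Icc (-a) a, -t ∈ Icc (-a) a :=
    fun t ht => ⟨by linarith [ht.2], by linarith [ht.1]⟩
  have hphase (t) (ht : t ∈ Icc (-a) a) := hr.hasDerivAt_phase (hsub ht)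
  have hrefl (t) (ht : t ∈ Icc (-a) a) := hr.hasDerivAt_reflected_phase (hsub (hneg t ht))
  obtain ⟨C, hC⟩ := hr.exists_phase_mem_box hn hsub
  have hC' : ∀ t ∈ Icc (-a) a, (r (-t), -deriv r (-t)) ∈ Icc 1 C ×ˢ Icc (-C) C := by
    intro t ht
    obtain ⟨h1, h2, h3⟩ := hC (-t) (hneg t ht)
    exact ⟨h1, by linarith, by linarith⟩
  obtain ⟨K, hK⟩ := catenoidField_lipschitzOnWith n C
  exact ODE_solution_unique_of_mem_Icc (v := fun _ => catenoidField n) (fun _ _ => hK)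
    ⟨neg_lt_zero.2 ha, ha⟩
    (fun t ht => (hphase t ht).continuousAt.continuousWithinAt)
    (fun t ht => hphase t (Ioo_subset_Icc_self ht)) (fun t ht => hC t (Ioo_subset_Icc_self ht))
    (fun t ht => (hrefl t ht).continuousAt.continuousWithinAt)
    (fun t ht => hrefl t (Ioo_subset_Icc_self ht)) (fun t ht => hC' t (Ioo_subset_Icc_self ht))
    (by simp [hr.deriv_zero])

theorem apply_neg_and_deriv_neg (hn : 2 ≤ n) (hz : z ∈ I) :
    r (-z) = r z ∧ deriv r (-z) = -deriv r z := by
  rcases eq_or_ne z 0 with rfl | hz0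
  · simp [hr.deriv_zero]
  have haI : |z| ∈ I := by
    rcases abs_choice z with h | h <;> rw [h]
    exacts [hz, hr.neg_mem z hz]
  have heq := hr.eqOn_reflected_phase hn (abs_pos.2 hz0) haI (abs_le.1 le_rfl)
  simp only [Prod.mk.injEq] at heq
  exact ⟨heq.1.symm, by linarith [heq.2]⟩

theorem tangentShift_neg (hn : 2 ≤ n) (hz : z ∈ I) :
    tangentShift r (-z) = -tangentShift r z := by
  obtain ⟨h1, h2⟩ := hr.apply_neg_and_deriv_neg hn hz
  rw [tangentShift, tangentShift, h1, h2, div_neg]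
  ring

theorem tangentRadiusSq_neg (hn : 2 ≤ n) (hz : z ∈ I) :
    tangentRadiusSq r (-z) = tangentRadiusSq r z := by
  obtain ⟨h1, h2⟩ := hr.apply_neg_and_deriv_neg hn hz
  rw [tangentRadiusSq, tangentRadiusSq, h1, h2, div_neg, neg_sq]

theorem ordConnected_pos : (I ∩ Ioi 0).OrdConnected :=
  hr.ordConnected.inter ordConnected_Ioi

theorem deriv_pos (hn : 2 ≤ n) (hx : x ∈ I ∩ Ioi 0) : 0 < deriv r x :=
  (hr.deriv_pos_iff hn hx.1).2 hx.2

theorem hasDerivAt_tangentShift (hx : x ∈ I) (hE : deriv r x ≠ 0) :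
    HasDerivAt (tangentShift r) (-shiftSpeed n r x) x := by
  refine (((hr.hasDerivAt hx).div (hr.hasDerivAt_deriv hx) hE).sub
    (hasDerivAt_id x)).congr_deriv ?_
  rw [shiftSpeed, hr.deriv_deriv_eq hx]
  field_simp [(hr.pos x hx).ne']
  ring

theorem hasDerivAt_tangentRadiusSq (hn : 2 ≤ n) (hx : x ∈ I) (hE : deriv r x ≠ 0) :
    HasDerivAt (tangentRadiusSq r) (radiusSlope n r x * shiftSpeed n r x) x := by
  have hn' : (n : ℝ) - 1 ≠ 0 := by linarith [(Nat.one_lt_cast.2 hn : (1 : ℝ) < n)]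
  refine ((((hr.hasDerivAt hx).div (hr.hasDerivAt_deriv hx) hE).pow 2).add
    ((hr.hasDerivAt hx).pow 2)).congr_deriv ?_
  rw [radiusSlope, shiftSpeed, hr.deriv_deriv_eq hx]
  simp only [Pi.div_apply, Nat.add_one_sub_one, pow_one]
  field_simp [(hr.pos x hx).ne']
  ring

theorem hasDerivAt_radiusSlope (hn : 2 ≤ n) (hx : x ∈ I) (hE : deriv r x ≠ 0) :
    HasDerivAt (radiusSlope n r) (slopeRate n (1 + deriv r x ^ 2) * shiftSpeed n r x) x := by
  have hn' : (n : ℝ) - 1 ≠ 0 := by linarith [(Nat.one_lt_cast.2 hn : (1 : ℝ) < n)]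
  have hnum := ((hr.hasDerivAt hx).const_mul 2).mul
    ((((hr.hasDerivAt_deriv hx).pow 2).add_const 1).sub_const (n : ℝ))
  have hden := (hr.hasDerivAt_deriv hx).const_mul ((n : ℝ) - 1)
  refine (hnum.div hden (mul_ne_zero hn' hE)).congr_deriv ?_
  rw [slopeRate, shiftSpeed, hr.deriv_deriv_eq hx]
  simp only [Pi.mul_apply, Pi.pow_apply]
  field_simp [(hr.pos x hx).ne']
  ring

theorem tangentShift_strictAntiOn (hn : 2 ≤ n) : StrictAntiOn (tangentShift r) (I ∩ Ioi 0) :=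
  strictAntiOn_of_hasDerivWithinAt_neg hr.ordConnected_pos.convex
    (fun _ hx => (hr.hasDerivAt_tangentShift hx.1
      (hr.deriv_pos hn hx).ne').continuousAt.continuousWithinAt)
    (fun _ hx => (hr.hasDerivAt_tangentShift (interior_subset hx).1
      (hr.deriv_pos hn (interior_subset hx)).ne').hasDerivWithinAt)
    (fun _ hx => neg_neg_of_pos
      (shiftSpeed_pos hn (hr.deriv_pos hn (interior_subset hx)).ne'))

theorem sub_one_lt_deriv_sq (hn : 2 ≤ n) (hx : x ∈ I ∩ Ioi 0) (h : tangentShift r x = 0) :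
    (n : ℝ) - 1 < deriv r x ^ 2 := by
  have hE := hr.deriv_pos hn hx
  have hrx : r x = x * deriv r x := by
    rwa [tangentShift, sub_eq_zero, div_eq_iff hE.ne'] at h
  have h1 := hr.one_lt_of_deriv_ne_zero hn hx.1 hE.ne'
  have h2 := mul_le_mul_of_nonneg_right (hr.sub_one_mul_le_deriv hn hx.1 hx.2.le) hE.le
  have : (1 : ℝ) < n := Nat.one_lt_cast.2 hn
  nlinarith

theorem radiusSlope_pos (hn : 2 ≤ n) (hx : x ∈ I ∩ Ioi 0) (h : tangentShift r x = 0) :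
    0 < radiusSlope n r x := by
  have hE := hr.deriv_pos hn hx
  have h1 := hr.sub_one_lt_deriv_sq hn hx h
  have : (1 : ℝ) < n := Nat.one_lt_cast.2 hn
  exact div_pos (mul_pos (mul_pos two_pos (hr.pos x hx.1)) (by linarith))
    (mul_pos (by linarith) hE)

theorem slopeRate_monotoneOn (hn : 2 ≤ n) :
    MonotoneOn (fun y => slopeRate n (1 + deriv r y ^ 2)) (I ∩ Ioi 0) := by
  intro u hu v hv huv
  have hEu := hr.deriv_pos hn hu
  have hEuv := (hr.strictMonoOn_deriv hn).monotoneOn hu.1 hv.1 huv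
  exact slopeRate_le_slopeRate n (le_add_of_nonneg_right (sq_nonneg _)) (by gcongr)

-- `radiusSlope`, as a function of `tangentShift`, is convex: it lies above its tangent line at `w`.
theorem radiusSlope_le_add (hn : 2 ≤ n) {w : ℝ} (hw : w ∈ I ∩ Ioi 0) (hx : x ∈ I ∩ Ioi 0)
    (h : tangentShift r w = 0) :
    radiusSlope n r w ≤ radiusSlope n r x + slopeRate n (1 + deriv r w ^ 2) * tangentShift r x := by
  set C := slopeRate n (1 + deriv r w ^ 2)
  have hderiv : ∀ y ∈ I ∩ Ioi 0, HasDerivAt (fun y => radiusSlope n r y + C * tangentShift r y)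
      ((slopeRate n (1 + deriv r y ^ 2) - C) * shiftSpeed n r y) y := by
    intro y hy
    have hE := (hr.deriv_pos hn hy).ne'
    exact ((hr.hasDerivAt_radiusSlope hn hy.1 hE).add
      ((hr.hasDerivAt_tangentShift hy.1 hE).const_mul C)).congr_deriv (by ring)
  have hsign : ∀ y ∈ I ∩ Ioi 0,
      0 ≤ (y - w) * ((slopeRate n (1 + deriv r y ^ 2) - C) * shiftSpeed n r y) := by
    intro y hy
    have hs := (shiftSpeed_pos hn (hr.deriv_pos hn hy).ne').le
    rcases le_total y w with hyw | hwy
    · rw [← mul_assoc]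
      exact mul_nonneg (mul_nonneg_of_nonpos_of_nonpos (sub_nonpos.2 hyw)
        (sub_nonpos.2 (hr.slopeRate_monotoneOn hn hy hw hyw))) hs
    · exact mul_nonneg (sub_nonneg.2 hwy)
        (mul_nonneg (sub_nonneg.2 (hr.slopeRate_monotoneOn hn hw hy hwy)) hs)
  simpa [h] using isMinOn_iff.1
    (isMinOn_of_hasDerivAt_of_mul_sub_nonneg hr.ordConnected_pos hderiv hw hsign) x hx

theorem tangentRadiusSq_lt_of_tangentShift_eq_neg (hn : 2 ≤ n) {a b c : ℝ} (ha : a ∈ I ∩ Ioi 0)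
    (hb : b ∈ I ∩ Ioi 0) (hc : 0 < c) (hac : tangentShift r a = c) (hbc : tangentShift r b = -c) :
    tangentRadiusSq r a < tangentRadiusSq r b := by
  have hab : a < b := ((hr.tangentShift_strictAntiOn hn).lt_iff_gt hb ha).1 (by linarith)
  have hsub : Icc a b ⊆ I ∩ Ioi 0 := hr.ordConnected_pos.out ha hb
  have hE : ∀ y ∈ Icc a b, deriv r y ≠ 0 := fun y hy => (hr.deriv_pos hn (hsub hy)).ne'
  obtain ⟨w, hw, hw0⟩ : ∃ w ∈ Icc a b, tangentShift r w = 0 :=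
    intermediate_value_Icc' hab.le
      (fun y hy =>
        (hr.hasDerivAt_tangentShift (hsub hy).1 (hE y hy)).continuousAt.continuousWithinAt)
      (by rw [hac, hbc]; constructor <;> linarith)
  set q := radiusSlope n r w
  set C := slopeRate n (1 + deriv r w ^ 2)
  -- the quadratic correction makes `Ω` monotone, by the convexity of `radiusSlope`
  set Ω : ℝ → ℝ := fun y =>
    tangentRadiusSq r y + q * tangentShift r y - C / 2 * tangentShift r y ^ 2
  have hΩ : ∀ y ∈ Icc a b, HasDerivAt Ω
      (shiftSpeed n r y * (radiusSlope n r y + C * tangentShift r y - q)) y := by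
    intro y hy
    have hh := hr.hasDerivAt_tangentShift (hsub hy).1 (hE y hy)
    refine (((hr.hasDerivAt_tangentRadiusSq hn (hsub hy).1 (hE y hy)).add (hh.const_mul q)).sub
      ((hh.pow 2).const_mul (C / 2))).congr_deriv ?_
    simp only [Nat.cast_ofNat, Nat.add_one_sub_one, pow_one]
    ring
  have hmono : MonotoneOn Ω (Icc a b) :=
    monotoneOn_of_hasDerivWithinAt_nonneg (convex_Icc a b)
      (fun y hy => (hΩ y hy).continuousAt.continuousWithinAt)
      (fun y hy => (hΩ y (interior_subset hy)).hasDerivWithinAt)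
      (fun y hy => mul_nonneg (shiftSpeed_pos hn (hE y (interior_subset hy))).le
        (sub_nonneg.2 (hr.radiusSlope_le_add hn (hsub hw) (hsub (interior_subset hy)) hw0)))
  have hΩab := hmono (left_mem_Icc.2 hab.le) (right_mem_Icc.2 hab.le) hab.le
  simp only [Ω, hac, hbc] at hΩab
  nlinarith [mul_pos (hr.radiusSlope_pos hn (hsub hw) hw0) hc]

end IsCatenoidSolution

theorem squared_radius_strict_comparison_general (n : ℕ) (hn : 2 ≤ n)
    (T : EReal) (r : ℝ → ℝ) (hr : IsMaxCatenoidProfile n T r)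
    (z₁ z₂ : ℝ → ℝ)
    (hdom₁ : ∀ c : ℝ, 0 ≤ c → ((z₁ c - c : ℝ) : EReal) ∈ Set.Ioo (-T) T)
    (hdom₂ : ∀ c : ℝ, 0 ≤ c → ((z₂ c - c : ℝ) : EReal) ∈ Set.Ioo (-T) T)
    (hneg : ∀ c : ℝ, 0 ≤ c → z₁ c < 0)
    (hpos : ∀ c : ℝ, 0 ≤ c → 0 < z₂ c)
    (heq₁ : ∀ c : ℝ, 0 ≤ c → z₁ c * deriv r (z₁ c - c) = r (z₁ c - c))
    (heq₂ : ∀ c : ℝ, 0 ≤ c → z₂ c * deriv r (z₂ c - c) = r (z₂ c - c))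
    (f₁ f₂ : ℝ → ℝ)
    (hf₁ : f₁ = fun c => (z₁ c) ^ 2 + (r (z₁ c - c)) ^ 2)
    (hf₂ : f₂ = fun c => (z₂ c) ^ 2 + (r (z₂ c - c)) ^ 2) :
    ∀ c : ℝ, 0 < c → f₂ c < f₁ c := by
  intro c hc
  have hI := hr.isCatenoidSolution
  have hx₁ : z₁ c - c ∈ {z : ℝ | (z : EReal) ∈ Ioo (-T) T} := hdom₁ c hc.le
  have hx₂ : z₂ c - c ∈ {z : ℝ | (z : EReal) ∈ Ioo (-T) T} := hdom₂ c hc.le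
  have hE₁ : deriv r (z₁ c - c) < 0 := by
    nlinarith [heq₁ c hc.le, hI.pos _ hx₁, hneg c hc.le]
  have hE₂ : 0 < deriv r (z₂ c - c) := by
    nlinarith [heq₂ c hc.le, hI.pos _ hx₂, hpos c hc.le]
  have hdiv₁ : r (z₁ c - c) / deriv r (z₁ c - c) = z₁ c := by
    rw [div_eq_iff hE₁.ne, heq₁ c hc.le]
  have hdiv₂ : r (z₂ c - c) / deriv r (z₂ c - c) = z₂ c := by
    rw [div_eq_iff hE₂.ne', heq₂ c hc.le]
  have key := hI.tangentRadiusSq_lt_of_tangentShift_eq_neg hn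
    ⟨hx₂, (hI.deriv_pos_iff hn hx₂).1 hE₂⟩
    ⟨hI.neg_mem _ hx₁, neg_pos.2 ((hI.deriv_neg_iff hn hx₁).1 hE₁)⟩ hc
    (by rw [tangentShift, hdiv₂]; ring)
    (by rw [hI.tangentShift_neg hn hx₁, tangentShift, hdiv₁]; ring)
  rw [hI.tangentRadiusSq_neg hn hx₁, tangentRadiusSq, tangentRadiusSq, hdiv₁, hdiv₂] at key
  simpa only [hf₁, hf₂] using key

/-- With `z₁(c) < 0 < z₂(c)` the two radial-tangency points and
`f_i(c) = z_i(c)² + r(z_i(c) − c)²`, one has `f₁(c) > f₂(c)` for every `c > 0`: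
the key step in the uniqueness of the free boundary `n`-catenoid. -/
theorem squared_radius_strict_comparison (n : ℕ) (hn : 2 ≤ n)
    (T : EReal) (r : ℝ → ℝ) (hr : IsMaxCatenoidProfile n T r)
    (z₁ z₂ : ℝ → ℝ)
    (hdom₁ : ∀ c : ℝ, 0 ≤ c → ((z₁ c - c : ℝ) : EReal) ∈ Set.Ioo (-T) T)
    (hdom₂ : ∀ c : ℝ, 0 ≤ c → ((z₂ c - c : ℝ) : EReal) ∈ Set.Ioo (-T) T)
    (hneg : ∀ c : ℝ, 0 ≤ c → z₁ c < 0)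
    (hpos : ∀ c : ℝ, 0 ≤ c → 0 < z₂ c)
    (heq₁ : ∀ c : ℝ, 0 ≤ c → z₁ c * deriv r (z₁ c - c) = r (z₁ c - c))
    (heq₂ : ∀ c : ℝ, 0 ≤ c → z₂ c * deriv r (z₂ c - c) = r (z₂ c - c))
    (huniq : ∀ c : ℝ, 0 ≤ c → ∀ z : ℝ, ((z - c : ℝ) : EReal) ∈ Set.Ioo (-T) T →
      z * deriv r (z - c) = r (z - c) → z = z₁ c ∨ z = z₂ c)
    (f₁ f₂ : ℝ → ℝ)
    (hf₁ : f₁ = fun c => (z₁ c) ^ 2 + (r (z₁ c - c)) ^ 2)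
    (hf₂ : f₂ = fun c => (z₂ c) ^ 2 + (r (z₂ c - c)) ^ 2) :
    ∀ c : ℝ, 0 < c → f₂ c < f₁ c :=
  squared_radius_strict_comparison_general n hn T r hr z₁ z₂ hdom₁ hdom₂ hneg hpos heq₁ heq₂ f₁ f₂
    hf₁ hf₂
end
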